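/- arXiv:1912.05782 — 2 statements merged into one kernel-verified Lean document; each statement's English description precedes it below -/
import Mathlib

section
/- Let X ⊆ ℝ^{n+1} be a set such that for every x ∈ ℝ^{n+1} there is an open box U containing x with X ∩ U definable (equivalently, X is 'locally definable'), and suppose X is bounded in the last coordinate, i.e., X ⊆ ℝ^n × I for some bounded open interval I. Then the image π(X) under the projection π : ℝ^{n+1} → ℝ^n forgetting the last coordinate is locally definable. -/
/-- An open box in ℝ^k. -/
def IsOpenBox {k : ℕ} (U : Set (Fin k → ℝ)) : Prop :=
  ∃ a b : Fin k → ℝ, U = Set.univ.pi fun i => Set.Ioo (a i) (b i)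

/-- The projection ℝ^{n+1} → ℝ^n forgetting the last coordinate. -/
def projLast {n : ℕ} (x : Fin (n + 1) → ℝ) : Fin n → ℝ := fun i => x i.castSucc

/-- A locally definable subset of ℝ^{n+1} which is bounded in the last coordinate
projects to a locally definable subset of ℝ^n.  Here `D1` and `D0` are collections of
"definable" subsets of ℝ^{n+1} and ℝ^n respectively, closed under finite unions,
intersections with box preimages, and images under the projection restricted to boxes. -/
theorem stmt_4 {n : ℕ} (D1 : Set (Set (Fin (n + 1) → ℝ))) (D0 : Set (Set (Fin n → ℝ)))
    (hempty : ∅ ∈ D0)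
    (hunion : ∀ A ∈ D0, ∀ B ∈ D0, A ∪ B ∈ D0)
    (hpre : ∀ A ∈ D1, ∀ V : Set (Fin n → ℝ), IsOpenBox V → A ∩ projLast ⁻¹' V ∈ D1)
    (hproj : ∀ A ∈ D1, ∀ U : Set (Fin (n + 1) → ℝ), IsOpenBox U →
      projLast '' (A ∩ U) ∈ D0)
    (X : Set (Fin (n + 1) → ℝ))
    (hloc : ∀ x : Fin (n + 1) → ℝ, ∃ U : Set (Fin (n + 1) → ℝ),
      IsOpenBox U ∧ x ∈ U ∧ X ∩ U ∈ D1)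
    (hbdd : ∃ a b : ℝ, a < b ∧ ∀ x ∈ X, x (Fin.last n) ∈ Set.Ioo a b) :
    ∀ y : Fin n → ℝ, ∃ V : Set (Fin n → ℝ), IsOpenBox V ∧ y ∈ V ∧
      projLast '' X ∩ V ∈ D0 := by
  obtain ⟨a, b, hab, hX⟩ := hbdd
  intro y
  -- choose for each t a box around (y, t)
  choose U hUbox hUmem hUD1 using fun t : ℝ => hloc (Fin.snoc y t)
  choose A B hAB using hUbox
  -- compactness
  have hsnoc : Continuous fun r : ℝ => (Fin.snoc y r : Fin (n + 1) → ℝ) := by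
    apply continuous_pi
    intro i
    refine Fin.lastCases ?_ ?_ i
    · simpa [Fin.snoc_last] using continuous_id'
    · intro j; simpa [Fin.snoc_castSucc] using continuous_const
  have hopen : ∀ t : ℝ, IsOpen ((fun r : ℝ => (Fin.snoc y r : Fin (n + 1) → ℝ)) ⁻¹' U t) := by
    intro t
    apply IsOpen.preimage hsnoc
    rw [hAB t]
    exact isOpen_set_pi Set.finite_univ fun i _ => isOpen_Ioo
  obtain ⟨s, hs⟩ := isCompact_Icc.elim_finite_subcover
    (fun t : ℝ => (fun r : ℝ => (Fin.snoc y r : Fin (n + 1) → ℝ)) ⁻¹' U t) hopen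
    (fun t ht => Set.mem_iUnion.2 ⟨t, hUmem t⟩)
  have hsne : s.Nonempty := by
    have := hs (Set.left_mem_Icc.2 hab.le)
    simp only [Set.mem_iUnion] at this
    obtain ⟨t, ht, _⟩ := this
    exact ⟨t, ht⟩
  -- the box V
  set V : Set (Fin n → ℝ) := Set.univ.pi fun i =>
    Set.Ioo (s.sup' hsne fun t => A t i.castSucc) (s.inf' hsne fun t => B t i.castSucc) with hV
  have hinU : ∀ t, ∀ x : Fin (n + 1) → ℝ, x ∈ U t ↔
      ∀ j : Fin (n + 1), x j ∈ Set.Ioo (A t j) (B t j) := by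
    intro t x
    rw [hAB t]
    simp [Set.mem_pi]
  have hyV : y ∈ V := by
    intro i _
    constructor
    · rw [Finset.sup'_lt_iff]
      intro t ht
      have := (hinU t _).1 (hUmem t) i.castSucc
      simpa [Fin.snoc_castSucc] using this.1
    · rw [Finset.lt_inf'_iff]
      intro t ht
      have := (hinU t _).1 (hUmem t) i.castSucc
      simpa [Fin.snoc_castSucc] using this.2
  refine ⟨V, ⟨_, _, rfl⟩, hyV, ?_⟩
  -- finite unions stay in D0
  have hfin : ∀ (s' : Finset ℝ) (f : ℝ → Set (Fin n → ℝ)),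
      (∀ t ∈ s', f t ∈ D0) → (⋃ t ∈ s', f t) ∈ D0 := by
    intro s'
    induction s' using Finset.induction_on with
    | empty => intro f _; simpa using hempty
    | insert _ _ h ih =>
      intro f hf
      rw [Finset.set_biUnion_insert]
      exact hunion _ (hf _ (Finset.mem_insert_self _ _)) _
        (ih f fun t ht => hf t (Finset.mem_insert_of_mem ht))
  have key : projLast '' X ∩ V = ⋃ t ∈ s, projLast '' ((X ∩ U t ∩ projLast ⁻¹' V) ∩ U t) := by
    ext z
    constructor
    · rintro ⟨⟨x, hxX, rfl⟩, hzV⟩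
      have hlast : x (Fin.last n) ∈ Set.Icc a b := Set.Ioo_subset_Icc_self (hX x hxX)
      have := hs hlast
      simp only [Set.mem_iUnion] at this
      obtain ⟨t, ht, hsnocmem⟩ := this
      have hxU : x ∈ U t := by
        rw [hinU]
        intro j
        refine Fin.lastCases ?_ ?_ j
        · have := (hinU t _).1 hsnocmem (Fin.last n)
          simpa [Fin.snoc_last] using this
        · intro i
          have h1 := hzV i (Set.mem_univ i)
          constructor
          · exact lt_of_le_of_lt (Finset.le_sup' (fun t => A t i.castSucc) ht) h1.1
          · exact lt_of_lt_of_le h1.2 (Finset.inf'_le (fun t => B t i.castSucc) ht)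
      exact Set.mem_biUnion ht ⟨x, ⟨⟨⟨hxX, hxU⟩, hzV⟩, hxU⟩, rfl⟩
    · intro hz
      simp only [Set.mem_iUnion] at hz
      obtain ⟨t, ht, x, ⟨⟨⟨hxX, _⟩, hxV⟩, _⟩, rfl⟩ := hz
      exact ⟨⟨x, hxX, rfl⟩, hxV⟩
  rw [key]
  apply hfin
  intro t ht
  exact hproj _ (hpre _ (hUD1 t) V ⟨fun i => s.sup' hsne fun t => A t i.castSucc, fun i => s.inf' hsne fun t => B t i.castSucc, hV⟩) (U t) ⟨A t, B t, hAB t⟩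
end

section
/- Let B = B₁ × I ⊆ ℝ^d be a bounded open box with I an open interval, and suppose for each j in a countable index set J, X_j ⊆ B is a set such that Y_j := {x ∈ B₁ : the fiber (X_j)_x contains an open interval} has empty interior in B₁ and, for each x ∉ ⋃_j Y_j, each fiber (X_j)_x contains no open interval and is locally finite. If additionally ⋃_j Y_j ≠ B₁ and each fiber over points outside ⋃_j Y_j has countable intersection with I via local finiteness at rationals, then ⋃_j X_j ≠ B. -/
private lemma countable_isMeagre {s : Set ℝ} (hs : s.Countable) : IsMeagre s := by
  rw [IsMeagre]
  have : sᶜ = ⋂ y ∈ s, ({y}ᶜ : Set ℝ) := by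
    ext z; simp only [Set.mem_compl_iff, Set.mem_iInter, Set.mem_compl_iff, Set.mem_singleton_iff]
    exact ⟨fun h i hi e => h (e ▸ hi), fun h hz => h z hz rfl⟩
  rw [this]
  exact (countable_bInter_mem hs).mpr fun y _ =>
    residual_of_dense_open isOpen_compl_singleton (dense_compl_singleton y)

/-- Inductive step of the lemma that a bounded open box cannot be covered by countably
many lower-dimensional sets: if `B = B₁ × I`, each `Y_j` (the set of base points over
which the fiber of `X_j` contains an interval) has empty interior in `B₁`, the union of
the `Y_j` does not cover `B₁`, and over base points outside all `Y_j` every fiber is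
locally finite at each rational, then the `X_j` do not cover `B`. -/
theorem stmt_9 {k : ℕ} (a b : Fin k → ℝ) (hB₁ : ∀ i, a i < b i)
    (c d : ℝ) (hcd : c < d) {J : Type*} [Countable J]
    (X : J → Set ((Fin k → ℝ) × ℝ))
    (hsub : ∀ j, X j ⊆ (Set.univ.pi fun i => Set.Ioo (a i) (b i)) ×ˢ Set.Ioo c d)
    (Y : J → Set (Fin k → ℝ))
    (hY : ∀ j, Y j = {x ∈ Set.univ.pi fun i => Set.Ioo (a i) (b i) |
      ∃ u v : ℝ, u < v ∧ Set.Ioo u v ⊆ {y : ℝ | (x, y) ∈ X j}})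
    (hYint : ∀ j, interior (Y j) = ∅)
    (hYcover : (⋃ j, Y j) ≠ Set.univ.pi fun i => Set.Ioo (a i) (b i))
    (hfibloc : ∀ x : Fin k → ℝ, x ∉ (⋃ j, Y j) → ∀ j, ∀ q : ℚ,
      ∃ U : Set ℝ, IsOpen U ∧ (q : ℝ) ∈ U ∧ ({y : ℝ | (x, y) ∈ X j} ∩ U).Finite) :
    (⋃ j, X j) ≠ (Set.univ.pi fun i => Set.Ioo (a i) (b i)) ×ˢ Set.Ioo c d := by
  intro heq
  set B₁ : Set (Fin k → ℝ) := Set.univ.pi fun i => Set.Ioo (a i) (b i) with hB₁def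
  -- pick x ∈ B₁ outside all Y j
  have hYsub : (⋃ j, Y j) ⊆ B₁ := by
    intro x hx
    obtain ⟨j, hj⟩ := Set.mem_iUnion.mp hx
    rw [hY j] at hj
    exact hj.1
  have hxex : ∃ x, x ∈ B₁ ∧ x ∉ ⋃ j, Y j := by
    by_contra h
    push_neg at h
    exact hYcover (Set.Subset.antisymm hYsub h)
  obtain ⟨x, hxB, hxY⟩ := hxex
  choose U hUo hUq hUfin using hfibloc x hxY
  -- the fiber of X j over x
  set F : J → Set ℝ := fun j => {y : ℝ | (x, y) ∈ X j} with hF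
  have hmeagre : ∀ j, IsMeagre (F j) := by
    intro j
    set V : Set ℝ := ⋃ q : ℚ, U j q with hV
    have hVo : IsOpen V := isOpen_iUnion fun q => hUo j q
    have hVd : Dense V := by
      have : Set.range ((↑) : ℚ → ℝ) ⊆ V := by
        rintro _ ⟨q, rfl⟩
        exact Set.mem_iUnion.mpr ⟨q, hUq j q⟩
      exact Dense.mono this Rat.denseRange_cast
    have h1 : IsMeagre (F j ∩ V) := by
      apply countable_isMeagre
      rw [Set.inter_iUnion]
      exact Set.countable_iUnion fun q => (hUfin j q).countable
    have h2 : IsMeagre (F j \ V) := by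
      apply IsMeagre.mono (Set.diff_subset_compl _ _) _
      rw [IsMeagre, compl_compl]
      exact residual_of_dense_open hVo hVd
    have : F j ⊆ (F j ∩ V) ∪ (F j \ V) := fun y hy => by
      by_cases hyV : y ∈ V
      · exact Or.inl ⟨hy, hyV⟩
      · exact Or.inr ⟨hy, hyV⟩
    refine IsMeagre.mono this ?_
    rw [IsMeagre, Set.compl_union]
    exact Filter.inter_mem h1 h2
  have hSmeagre : IsMeagre (⋃ j, F j) := by
    rw [IsMeagre, Set.compl_iUnion]
    exact (countable_iInter_mem).mpr hmeagre
  have hdense : Dense (⋃ j, F j)ᶜ := dense_of_mem_residual hSmeagre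
  obtain ⟨y, hyS, hyI⟩ := hdense.exists_mem_open (isOpen_Ioo (a := c) (b := d))
    ⟨(c + d) / 2, Set.mem_Ioo.mpr ⟨by linarith, by linarith⟩⟩
  -- (x, y) is in the box but in no X j
  have hmem : (x, y) ∈ (⋃ j, X j) := by
    rw [heq]
    exact ⟨hxB, hyI⟩
  obtain ⟨j, hj⟩ := Set.mem_iUnion.mp hmem
  exact hyS (Set.mem_iUnion.mpr ⟨j, hj⟩)
end
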